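/- arXiv:1807.02421 — 6 statements merged into one kernel-verified Lean document; each statement's English description precedes it below -/
import Mathlib

section
/- Let a, b > 0 and x ∈ ℝ. Define E(1-κ|x) = (∫₀¹ κ^{b-1/2}(1-κ)^a e^{-κx²/2} dκ) / (∫₀¹ κ^{b-1/2}(1-κ)^{a-1} e^{-κx²/2} dκ). Then E(1-κ|x) ≤ e^{x²/2} · a/(a + b + 1/2). -/
/-!
The factor `exp (-κ x² / 2)` lies between `exp (-x² / 2)` and `1` on `[0, 1]`, so the numerator
is at most the beta integral `B(b + 1/2, a + 1)` and the denominator at least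
`exp (-x² / 2) B(b + 1/2, a)`. The recurrence `B(p, q + 1) = q / (p + q) · B(p, q)` finishes.
-/

open Real MeasureTheory ProbabilityTheory

section BetaIntegral

variable {p q : ℝ}

lemma ofReal_rpow_mul_one_sub_rpow {x : ℝ} (hx : x ∈ Set.Icc (0 : ℝ) 1) :
    ((x ^ (p - 1) * (1 - x) ^ (q - 1) : ℝ) : ℂ)
      = (x : ℂ) ^ ((p : ℂ) - 1) * (1 - (x : ℂ)) ^ ((q : ℂ) - 1) := by
  have h1x : 0 ≤ 1 - x := sub_nonneg.mpr hx.2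
  push_cast [Complex.ofReal_mul, Complex.ofReal_cpow hx.1, Complex.ofReal_cpow h1x]
  rfl

lemma intervalIntegrable_rpow_mul_one_sub_rpow (hp : 0 < p) (hq : 0 < q) :
    IntervalIntegrable (fun x : ℝ => x ^ (p - 1) * (1 - x) ^ (q - 1)) volume 0 1 := by
  have h := Complex.betaIntegral_convergent (u := p) (v := q) (by simpa) (by simpa)
  rw [intervalIntegrable_iff_integrableOn_Ioc_of_le zero_le_one] at h ⊢
  refine IntegrableOn.congr_fun h.re (fun x hx => ?_) measurableSet_Ioc
  simp [← ofReal_rpow_mul_one_sub_rpow (p := p) (q := q) ⟨hx.1.le, hx.2⟩]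

lemma integral_rpow_mul_one_sub_rpow (hp : 0 < p) (hq : 0 < q) :
    ∫ x in (0 : ℝ)..1, x ^ (p - 1) * (1 - x) ^ (q - 1) = beta p q := by
  rw [beta_eq_betaIntegralReal p q hp hq, Complex.betaIntegral,
    ← intervalIntegral.integral_congr (fun x hx => ofReal_rpow_mul_one_sub_rpow (p := p) (q := q)
      (by rwa [Set.uIcc_of_le zero_le_one] at hx)),
    intervalIntegral.integral_ofReal, Complex.ofReal_re]

lemma beta_add_one_right (hp : 0 < p) (hq : 0 < q) : beta p (q + 1) = q / (p + q) * beta p q := by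
  rw [beta, beta, ← add_assoc, Real.Gamma_add_one hq.ne', Real.Gamma_add_one (by positivity)]
  field_simp

end BetaIntegral


open Real

section ExponentialWeight

variable {p q t : ℝ}

lemma intervalIntegrable_rpow_mul_one_sub_rpow_mul_exp (hp : 0 < p) (hq : 0 < q) :
    IntervalIntegrable (fun x : ℝ => x ^ (p - 1) * (1 - x) ^ (q - 1) * exp (-x * t)) volume 0 1 :=
  (intervalIntegrable_rpow_mul_one_sub_rpow hp hq).mul_continuousOn (by fun_prop)

lemma integral_rpow_mul_one_sub_rpow_mul_exp_le (hp : 0 < p) (hq : 0 < q) (ht : 0 ≤ t) :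
    ∫ x in (0 : ℝ)..1, x ^ (p - 1) * (1 - x) ^ (q - 1) * exp (-x * t) ≤ beta p q := by
  rw [← integral_rpow_mul_one_sub_rpow hp hq]
  refine intervalIntegral.integral_mono_on zero_le_one
    (intervalIntegrable_rpow_mul_one_sub_rpow_mul_exp hp hq)
    (intervalIntegrable_rpow_mul_one_sub_rpow hp hq) fun x hx => ?_
  obtain ⟨hx0, hx1⟩ := hx
  have h1x : 0 ≤ 1 - x := sub_nonneg.mpr hx1
  refine mul_le_of_le_one_right (by positivity) (exp_le_one_iff.mpr ?_)
  nlinarith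

lemma exp_neg_mul_beta_le_integral_rpow_mul_one_sub_rpow_mul_exp (hp : 0 < p) (hq : 0 < q)
    (ht : 0 ≤ t) :
    exp (-t) * beta p q ≤ ∫ x in (0 : ℝ)..1, x ^ (p - 1) * (1 - x) ^ (q - 1) * exp (-x * t) := by
  rw [← integral_rpow_mul_one_sub_rpow hp hq, ← intervalIntegral.integral_const_mul]
  refine intervalIntegral.integral_mono_on zero_le_one
    ((intervalIntegrable_rpow_mul_one_sub_rpow hp hq).const_mul _)
    (intervalIntegrable_rpow_mul_one_sub_rpow_mul_exp hp hq) fun x hx => ?_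
  obtain ⟨hx0, hx1⟩ := hx
  have h1x : 0 ≤ 1 - x := sub_nonneg.mpr hx1
  rw [mul_comm]
  exact mul_le_mul_of_nonneg_left (exp_le_exp.mpr (by nlinarith)) (by positivity)

end ExponentialWeight

/-- NBP shrinkage bound: E(1-κ|x) ≤ e^{x²/2} a/(a+b+1/2). -/
theorem stmt_0 (a b x : ℝ) (ha : 0 < a) (hb : 0 < b) :
    (∫ κ in (0:ℝ)..1, κ ^ (b - 1/2) * (1 - κ) ^ a * Real.exp (-κ * x^2 / 2)) /
      (∫ κ in (0:ℝ)..1, κ ^ (b - 1/2) * (1 - κ) ^ (a - 1) * Real.exp (-κ * x^2 / 2))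
    ≤ Real.exp (x^2 / 2) * (a / (a + b + 1/2)) := by
  set p := b + 1/2
  have hp : 0 < p := by positivity
  have ht : 0 ≤ x ^ 2 / 2 := by positivity
  have hB : 0 < beta p a := beta_pos hp ha
  have hnum := integral_rpow_mul_one_sub_rpow_mul_exp_le hp (by linarith : 0 < a + 1) ht
  have hden := exp_neg_mul_beta_le_integral_rpow_mul_one_sub_rpow_mul_exp hp ha ht
  rw [add_sub_cancel_right] at hnum
  simp_rw [show b - 1/2 = p - 1 by ring, mul_div_assoc]
  calc _ ≤ beta p (a + 1) / (exp (-(x ^ 2 / 2)) * beta p a) :=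
        div_le_div₀ (beta_pos hp (by linarith)).le hnum (mul_pos (exp_pos _) hB) hden
    _ = exp (x ^ 2 / 2) * (a / (a + b + 1/2)) := by
        rw [beta_add_one_right hp ha, exp_neg]
        field_simp
        ring
end

section
/- Let a ∈ (0,1), b ∈ (1/2,∞), ε ∈ (0,1), and x ∈ ℝ. Define Pr(κ < ε | x) = (∫₀^ε κ^{b-1/2}(1-κ)^{a-1} e^{-κx²/2} dκ) / (∫₀¹ κ^{b-1/2}(1-κ)^{a-1} e^{-κx²/2} dκ). Then Pr(κ < ε | x) ≤ e^{x²/2} · aε / ((b + 1/2)(1 - ε)). -/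
/-!
Below ε the factor (1 - κ)^(a-1) is at most (1 - ε)^(a-1) (as a < 1) and the exponential at most 1,
so the numerator is at most (1 - ε)^(a-1) ε^(b+1/2) / (b + 1/2). The denominator is at least its
part over (ε, 1), where κ^(b-1/2) ≥ ε^(b-1/2) (as b > 1/2) and e^(-κx²/2) ≥ e^(-x²/2), so it is at
least e^(-x²/2) ε^(b-1/2) (1 - ε)^a / a. The quotient of the two bounds is the claimed one.
-/

open Real MeasureTheory intervalIntegral Set

/-- The unnormalised posterior density of κ, with `p = b - 1/2`, `q = a - 1`, `t = x²/2`. -/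
noncomputable def betaExpKernel (p q t κ : ℝ) : ℝ := κ ^ p * (1 - κ) ^ q * exp (-κ * t)

lemma intervalIntegrable_one_sub_rpow {q : ℝ} (hq : -1 < q) (c d : ℝ) :
    IntervalIntegrable (fun κ : ℝ => (1 - κ) ^ q) volume c d := by
  simpa using (intervalIntegrable_rpow' (a := 1 - c) (b := 1 - d) hq).comp_sub_left 1

lemma integral_one_sub_rpow {q : ℝ} (hq : -1 < q) (c : ℝ) :
    ∫ κ in c..1, (1 - κ) ^ q = (1 - c) ^ (q + 1) / (q + 1) := by
  rw [integral_comp_sub_left (fun u : ℝ => u ^ q), sub_self, integral_rpow (Or.inl hq),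
    zero_rpow (by linarith), sub_zero]

namespace betaExpKernel

variable {p q t : ℝ}

lemma nonneg {κ : ℝ} (h0 : 0 ≤ κ) (h1 : κ ≤ 1) : 0 ≤ betaExpKernel p q t κ := by
  have : 0 ≤ 1 - κ := by linarith
  unfold betaExpKernel; positivity

lemma intervalIntegrable (hp : 0 ≤ p) (hq : -1 < q) :
    IntervalIntegrable (betaExpKernel p q t) volume 0 1 := by
  have hcont : ContinuousOn (fun κ : ℝ => κ ^ p * exp (-κ * t)) (uIcc 0 1) := by
    have := continuous_rpow_const hp
    fun_prop
  exact ((intervalIntegrable_one_sub_rpow hq 0 1).continuousOn_mul hcont).congr fun κ _ => by simp only [betaExpKernel]; ring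

end betaExpKernel

lemma integral_betaExpKernel_le {p q t ε : ℝ} (hp : -1 < p) (hq : q ≤ 0) (ht : 0 ≤ t)
    (hε0 : 0 ≤ ε) (hε1 : ε < 1) :
    ∫ κ in 0..ε, betaExpKernel p q t κ ≤ (1 - ε) ^ q * (ε ^ (p + 1) / (p + 1)) := by
  have hbound : ∫ κ in 0..ε, (1 - ε) ^ q * κ ^ p = (1 - ε) ^ q * (ε ^ (p + 1) / (p + 1)) := by
    rw [intervalIntegral.integral_const_mul, integral_rpow (Or.inl hp), zero_rpow (by linarith),
      sub_zero]
  rw [← hbound, integral_of_le hε0, integral_of_le hε0]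
  refine integral_mono_of_nonneg ?_ ((intervalIntegrable_rpow' hp).const_mul _).1 ?_
  all_goals filter_upwards [ae_restrict_mem measurableSet_Ioc] with κ ⟨hκ0, hκε⟩
  · exact betaExpKernel.nonneg hκ0.le (by linarith)
  · have h1 : (1 - κ) ^ q ≤ (1 - ε) ^ q := rpow_le_rpow_of_nonpos (by linarith) (by linarith) hq
    have h2 : exp (-κ * t) ≤ 1 := exp_le_one_iff.2 (by nlinarith)
    have h3 : 0 ≤ κ ^ p := rpow_nonneg hκ0.le _
    calc betaExpKernel p q t κ = κ ^ p * ((1 - κ) ^ q * exp (-κ * t)) := mul_assoc _ _ _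
      _ ≤ κ ^ p * ((1 - ε) ^ q * 1) := by gcongr
      _ = (1 - ε) ^ q * κ ^ p := by ring

lemma le_integral_betaExpKernel {p q t ε : ℝ} (hp : 0 ≤ p) (hq : -1 < q) (ht : 0 ≤ t)
    (hε0 : 0 ≤ ε) (hε1 : ε ≤ 1) :
    exp (-t) * ε ^ p * ((1 - ε) ^ (q + 1) / (q + 1)) ≤ ∫ κ in 0..1, betaExpKernel p q t κ := by
  have hint := betaExpKernel.intervalIntegrable (t := t) hp hq
  have hsub : uIcc ε 1 ⊆ uIcc 0 1 := by
    rw [uIcc_of_le hε1, uIcc_of_le zero_le_one]; exact Icc_subset_Icc hε0 le_rfl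
  calc exp (-t) * ε ^ p * ((1 - ε) ^ (q + 1) / (q + 1))
      = ∫ κ in ε..1, exp (-t) * ε ^ p * (1 - κ) ^ q := by
        rw [intervalIntegral.integral_const_mul, integral_one_sub_rpow hq]
    _ ≤ ∫ κ in ε..1, betaExpKernel p q t κ := by
        refine integral_mono_on hε1 ?_ (hint.mono_set hsub) fun κ ⟨hεκ, hκ1⟩ => ?_
        · exact (intervalIntegrable_one_sub_rpow hq ε 1).const_mul _
        · have h1 : ε ^ p ≤ κ ^ p := rpow_le_rpow hε0 hεκ hp
          have h2 : exp (-t) ≤ exp (-κ * t) := exp_le_exp.2 (by nlinarith)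
          have h3 : 0 ≤ κ ^ p * (1 - κ) ^ q :=
            mul_nonneg (rpow_nonneg (by linarith) _) (rpow_nonneg (by linarith) _)
          calc exp (-t) * ε ^ p * (1 - κ) ^ q = ε ^ p * (1 - κ) ^ q * exp (-t) := by ring
            _ ≤ κ ^ p * (1 - κ) ^ q * exp (-κ * t) := by gcongr
    _ ≤ ∫ κ in 0..1, betaExpKernel p q t κ := by
        refine integral_mono_interval hε0 hε1 le_rfl ?_ hint
        filter_upwards [ae_restrict_mem measurableSet_Ioc] with κ ⟨hκ0, hκ1⟩
        exact betaExpKernel.nonneg hκ0.le hκ1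

lemma integral_betaExpKernel_div_le {p q t ε : ℝ} (hp : 0 ≤ p) (hq₀ : -1 < q) (hq₁ : q ≤ 0)
    (ht : 0 ≤ t) (hε0 : 0 < ε) (hε1 : ε < 1) :
    (∫ κ in 0..ε, betaExpKernel p q t κ) / (∫ κ in 0..1, betaExpKernel p q t κ)
      ≤ exp t * ((q + 1) * ε / ((p + 1) * (1 - ε))) := by
  have h1ε : 0 < 1 - ε := by linarith
  have hq : 0 < q + 1 := by linarith
  calc _ ≤ (1 - ε) ^ q * (ε ^ (p + 1) / (p + 1)) /
          (exp (-t) * ε ^ p * ((1 - ε) ^ (q + 1) / (q + 1))) :=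
        div_le_div₀ (by positivity) (integral_betaExpKernel_le (by linarith) hq₁ ht hε0.le hε1)
          (by positivity) (le_integral_betaExpKernel hp hq₀ ht hε0.le hε1.le)
    _ = _ := by
        rw [rpow_add_one hε0.ne', rpow_add_one h1ε.ne', exp_neg]
        field_simp

/-- NBP posterior concentration: Pr(κ < ε | x) ≤ e^{x²/2} aε/((b+1/2)(1-ε)). -/
theorem stmt_1 (a b ε x : ℝ) (ha : a ∈ Set.Ioo (0:ℝ) 1) (hb : b ∈ Set.Ioi (1/2 : ℝ))
    (hε : ε ∈ Set.Ioo (0:ℝ) 1) :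
    (∫ κ in (0:ℝ)..ε, κ ^ (b - 1/2) * (1 - κ) ^ (a - 1) * Real.exp (-κ * x^2 / 2)) /
      (∫ κ in (0:ℝ)..1, κ ^ (b - 1/2) * (1 - κ) ^ (a - 1) * Real.exp (-κ * x^2 / 2))
    ≤ Real.exp (x^2 / 2) * (a * ε / ((b + 1/2) * (1 - ε))) := by
  have h := integral_betaExpKernel_div_le (p := b - 1/2) (q := a - 1) (t := x ^ 2 / 2)
    (by linarith [mem_Ioi.1 hb]) (by linarith [ha.1]) (by linarith [ha.2]) (by positivity)
    hε.1 hε.2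
  rw [sub_add_cancel, show b - 1/2 + 1 = b + 1/2 by ring] at h
  simpa only [betaExpKernel, mul_div_assoc] using h
end

section
/- Let b > 1/2 be fixed, and let (aₙ) be a sequence with aₙ ∈ (0,1) and aₙ → 0. Then for every fixed x ∈ ℝ, the posterior shrinkage expectation E(1-κ|x; aₙ, b) = (∫₀¹ κ^{b-1/2}(1-κ)^{aₙ} e^{-κx²/2} dκ)/(∫₀¹ κ^{b-1/2}(1-κ)^{aₙ-1} e^{-κx²/2} dκ) converges to 0 as n → ∞. -/
/-!
The numerator stays bounded (its integrand is at most `1` on `[0, 1]`), while the denominator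
blows up like `1 / aₙ`: on `[1/2, 1]` the factor `κ ^ (b - 1/2) * exp (-κ x² / 2)` is bounded
below by a positive constant and `∫_{1/2}^1 (1 - κ) ^ (aₙ - 1) dκ = (1/2) ^ aₙ / aₙ`.
-/

open Real Filter Set intervalIntegral

namespace ShrinkageIntegrand

noncomputable def integrand (q t x κ : ℝ) : ℝ := κ ^ q * (1 - κ) ^ t * exp (-κ * x ^ 2 / 2)

variable {q t : ℝ} (x : ℝ)

lemma integrand_nonneg {κ : ℝ} (hκ : κ ∈ Icc (0 : ℝ) 1) : 0 ≤ integrand q t x κ := by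
  obtain ⟨h0, h1⟩ := hκ
  have : 0 ≤ 1 - κ := by linarith
  unfold integrand
  positivity

lemma integrand_le_one (hq : 0 ≤ q) (ht : 0 ≤ t) {κ : ℝ} (hκ : κ ∈ Icc (0 : ℝ) 1) :
    integrand q t x κ ≤ 1 := by
  obtain ⟨h0, h1⟩ := hκ
  have hexp : exp (-κ * x ^ 2 / 2) ≤ 1 := exp_le_one_iff.mpr (by nlinarith [sq_nonneg x])
  calc integrand q t x κ ≤ 1 * 1 * 1 := by
        unfold integrand
        gcongr
        · exact rpow_le_one h0 h1 hq
        · exact rpow_le_one (by linarith) (by linarith) ht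
    _ = 1 := by norm_num

lemma half_rpow_mul_exp_mul_le_integrand (hq : 0 ≤ q) {κ : ℝ} (hκ : κ ∈ Icc (1 / 2 : ℝ) 1) :
    (1 / 2 : ℝ) ^ q * exp (-x ^ 2 / 2) * (1 - κ) ^ t ≤ integrand q t x κ := by
  obtain ⟨h0, h1⟩ := hκ
  have : 0 ≤ 1 - κ := by linarith
  have hexp : exp (-x ^ 2 / 2) ≤ exp (-κ * x ^ 2 / 2) :=
    exp_le_exp.mpr (by nlinarith [sq_nonneg x])
  calc (1 / 2 : ℝ) ^ q * exp (-x ^ 2 / 2) * (1 - κ) ^ t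
      = (1 / 2 : ℝ) ^ q * (1 - κ) ^ t * exp (-x ^ 2 / 2) := by ring
    _ ≤ integrand q t x κ := by unfold integrand; gcongr

lemma intervalIntegrable_one_sub_rpow {t : ℝ} (ht : -1 < t) (a b : ℝ) :
    IntervalIntegrable (fun κ : ℝ => (1 - κ) ^ t) MeasureTheory.volume a b := by
  simpa using (intervalIntegrable_rpow' ht (a := 1 - a) (b := 1 - b)).comp_sub_left 1

lemma intervalIntegrable_integrand (hq : 0 ≤ q) (ht : -1 < t) (a b : ℝ) :
    IntervalIntegrable (integrand q t x) MeasureTheory.volume a b := by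
  have hpow : ContinuousOn (fun κ : ℝ => κ ^ q) (uIcc a b) :=
    (continuous_rpow_const hq).continuousOn
  have hexp : ContinuousOn (fun κ : ℝ => exp (-κ * x ^ 2 / 2)) (uIcc a b) := by
    fun_prop
  exact ((intervalIntegrable_one_sub_rpow ht a b).continuousOn_mul hpow).mul_continuousOn hexp

lemma integral_integrand_nonneg : 0 ≤ ∫ κ in (0 : ℝ)..1, integrand q t x κ :=
  integral_nonneg zero_le_one fun _ hκ => integrand_nonneg x hκ

lemma integral_integrand_le_one (hq : 0 ≤ q) (ht : 0 ≤ t) :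
    ∫ κ in (0 : ℝ)..1, integrand q t x κ ≤ 1 := by
  calc ∫ κ in (0 : ℝ)..1, integrand q t x κ ≤ ∫ _ in (0 : ℝ)..1, (1 : ℝ) :=
        integral_mono_on zero_le_one (intervalIntegrable_integrand x hq (by linarith) 0 1)
          intervalIntegrable_const fun _ hκ => integrand_le_one x hq ht hκ
    _ = 1 := by simp

lemma integral_one_sub_rpow_sub_one {a : ℝ} (ha : 0 < a) :
    ∫ κ in (1 / 2 : ℝ)..1, (1 - κ) ^ (a - 1) = (1 / 2 : ℝ) ^ a / a := by
  have hsub := integral_comp_sub_left (a := (1 / 2 : ℝ)) (b := 1) (fun u : ℝ => u ^ (a - 1)) 1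
  norm_num at hsub
  rw [hsub, integral_rpow (Or.inl (by linarith)), sub_add_cancel, zero_rpow ha.ne', sub_zero]

lemma div_le_integral_integrand (hq : 0 ≤ q) {a : ℝ} (ha : a ∈ Ioc (0 : ℝ) 1) :
    (1 / 2 : ℝ) ^ q * exp (-x ^ 2 / 2) / (2 * a) ≤ ∫ κ in (0 : ℝ)..1, integrand q (a - 1) x κ := by
  obtain ⟨ha0, ha1⟩ := ha
  set c := (1 / 2 : ℝ) ^ q * exp (-x ^ 2 / 2)
  have hint := intervalIntegrable_integrand x hq (t := a - 1) (by linarith)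
  have hleft : 0 ≤ ∫ κ in (0 : ℝ)..(1 / 2), integrand q (a - 1) x κ :=
    integral_nonneg (by norm_num) fun κ hκ =>
      integrand_nonneg x ⟨hκ.1, hκ.2.trans (by norm_num)⟩
  have hhalf : (1 / 2 : ℝ) ≤ (1 / 2 : ℝ) ^ a := by
    simpa using rpow_le_rpow_of_exponent_ge (x := (1 / 2 : ℝ)) (by norm_num) (by norm_num) ha1
  calc c / (2 * a) = c * (1 / 2 / a) := by field_simp
    _ ≤ c * ((1 / 2 : ℝ) ^ a / a) := by gcongr
    _ = ∫ κ in (1 / 2 : ℝ)..1, c * (1 - κ) ^ (a - 1) := by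
        rw [integral_const_mul, integral_one_sub_rpow_sub_one ha0]
    _ ≤ ∫ κ in (1 / 2 : ℝ)..1, integrand q (a - 1) x κ :=
        integral_mono_on (by norm_num)
          ((intervalIntegrable_one_sub_rpow (by linarith) _ _).const_mul c) (hint _ _)
          fun _ hκ => half_rpow_mul_exp_mul_le_integrand x hq hκ
    _ ≤ ∫ κ in (0 : ℝ)..1, integrand q (a - 1) x κ := by
        rw [← integral_add_adjacent_intervals (hint 0 (1 / 2)) (hint (1 / 2) 1)]
        linarith

end ShrinkageIntegrand

open ShrinkageIntegrand in
/-- If aₙ → 0 then the posterior shrinkage expectation E(1-κ|x; aₙ, b) → 0 for fixed x. -/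
theorem stmt_3 (b : ℝ) (hb : 1/2 < b) (a : ℕ → ℝ) (ha : ∀ n, a n ∈ Set.Ioo (0:ℝ) 1)
    (ha0 : Tendsto a atTop (nhds 0)) (x : ℝ) :
    Tendsto (fun n =>
      (∫ κ in (0:ℝ)..1, κ ^ (b - 1/2) * (1 - κ) ^ (a n) * Real.exp (-κ * x^2 / 2)) /
        (∫ κ in (0:ℝ)..1, κ ^ (b - 1/2) * (1 - κ) ^ (a n - 1) * Real.exp (-κ * x^2 / 2)))
      atTop (nhds 0) := by
  have hq : 0 ≤ b - 1/2 := by linarith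
  set c := (1 / 2 : ℝ) ^ (b - 1/2) * exp (-x ^ 2 / 2)
  have hc : 0 < c := by positivity
  show Tendsto (fun n => (∫ κ in (0:ℝ)..1, integrand (b - 1/2) (a n) x κ) /
    ∫ κ in (0:ℝ)..1, integrand (b - 1/2) (a n - 1) x κ) atTop (nhds 0)
  refine squeeze_zero (fun n => ?_) (fun n => ?_)
    (by simpa using (ha0.const_mul 2).div_const c)
  · exact div_nonneg (integral_integrand_nonneg x) (integral_integrand_nonneg x)
  · obtain ⟨han0, han1⟩ := ha n
    calc _ ≤ 1 / (c / (2 * a n)) :=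
          div_le_div₀ zero_le_one (integral_integrand_le_one x hq han0.le) (by positivity)
            (div_le_integral_integrand x hq ⟨han0, han1.le⟩)
      _ = 2 * a n / c := one_div_div _ _
end

section
/- Let a ∈ (0,1), b ∈ (1/2,∞), η ∈ (0,1), δ ∈ (0,1), and x ≠ 0. Then E(κ·1{κ<η} | x) = (∫₀^η κ^{b+1/2}(1-κ)^{a-1} e^{-κx²/2} dκ)/(∫₀¹ κ^{b-1/2}(1-κ)^{a-1} e^{-κx²/2} dκ) ≤ (1-η)^{a-1} Γ(b+3/2) 2^{b+3/2} · [x² ∫₀^{x²} t^{b-1/2} e^{-t/2} dt]^{-1}. -/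
open Real MeasureTheory Set

/-! Since `a < 1`, the weight `(1 - κ)^(a-1)` is at most `(1 - η)^(a-1)` on `[0, η]` and at least
`1` on `[0, 1)`. Dropping it this way and substituting `t = κ x²` turns both integrals into
incomplete Gamma integrals of `t^c e^(-t/2)`: the one from the numerator is bounded by the complete
integral `Γ(b + 3/2) 2^(b + 3/2)`, the one from the denominator is the integral in the bound. -/

theorem integral_rpow_mul_exp_neg_mul_le_Gamma {a r T : ℝ} (ha : 0 < a) (hr : 0 < r)
    (hT : 0 ≤ T) :
    ∫ t in (0:ℝ)..T, t ^ (a - 1) * exp (-(r * t)) ≤ (1 / r) ^ a * Gamma a := by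
  have hint : IntegrableOn (fun t : ℝ => t ^ (a - 1) * exp (-(r * t))) (Ioi 0) := by
    simpa [rpow_one, neg_mul] using
      integrableOn_rpow_mul_exp_neg_mul_rpow (p := 1) (by linarith) one_pos hr
  rw [intervalIntegral.integral_of_le hT, ← integral_rpow_mul_exp_neg_mul_Ioi ha hr]
  refine setIntegral_mono_set hint ?_ Ioc_subset_Ioi_self.eventuallyLE
  filter_upwards [self_mem_ae_restrict measurableSet_Ioi] with t (ht : 0 < t)
  positivity

theorem rpow_mul_integral_rpow_mul_comp_mul (c : ℝ) (f : ℝ → ℝ) {s η : ℝ} (hs : 0 < s)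
    (hη : 0 ≤ η) :
    s ^ (c + 1) * ∫ κ in (0:ℝ)..η, κ ^ c * f (κ * s) = ∫ t in (0:ℝ)..η * s, t ^ c * f t := by
  have hsub := intervalIntegral.integral_comp_mul_right (a := 0) (b := η)
    (fun t => t ^ c * f t) hs.ne'
  rw [zero_mul, smul_eq_mul] at hsub
  calc s ^ (c + 1) * ∫ κ in (0:ℝ)..η, κ ^ c * f (κ * s)
      = s * ∫ κ in (0:ℝ)..η, (κ * s) ^ c * f (κ * s) := by
        rw [← intervalIntegral.integral_const_mul, ← intervalIntegral.integral_const_mul]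
        refine intervalIntegral.integral_congr fun κ hκ => ?_
        rw [uIcc_of_le hη] at hκ
        rw [mul_rpow hκ.1 hs.le, rpow_add_one hs.ne']
        ring
    _ = ∫ t in (0:ℝ)..η * s, t ^ c * f t := by rw [hsub, mul_inv_cancel_left₀ hs.ne']

theorem integral_mul_one_sub_rpow_le {f : ℝ → ℝ} {a η : ℝ} (ha : a ≤ 1) (hη : 0 ≤ η)
    (hη1 : η < 1) (hf : ContinuousOn f (Icc 0 η)) (hf0 : ∀ κ ∈ Icc 0 η, 0 ≤ f κ) :
    ∫ κ in (0:ℝ)..η, f κ * (1 - κ) ^ (a - 1) ≤ (1 - η) ^ (a - 1) * ∫ κ in (0:ℝ)..η, f κ := by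
  have hw : ContinuousOn (fun κ : ℝ => (1 - κ) ^ (a - 1)) (Icc 0 η) :=
    ContinuousOn.rpow_const (f := fun κ => 1 - κ) (by fun_prop)
      fun κ hκ => Or.inl (by linarith [hκ.2])
  rw [← intervalIntegral.integral_const_mul]
  refine intervalIntegral.integral_mono_on hη ?_ ?_ fun κ hκ => ?_
  · exact (hf.mul hw).intervalIntegrable_of_Icc hη
  · exact (continuousOn_const.mul hf).intervalIntegrable_of_Icc hη
  · rw [mul_comm]
    exact mul_le_mul_of_nonneg_right
      (rpow_le_rpow_of_nonpos (by linarith) (by linarith [hκ.2]) (by linarith)) (hf0 κ hκ)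

theorem integral_le_integral_mul_one_sub_rpow {f : ℝ → ℝ} {a : ℝ} (ha0 : 0 < a) (ha1 : a ≤ 1)
    (hf : ContinuousOn f (Icc 0 1)) (hf0 : ∀ κ ∈ Ioo 0 1, 0 ≤ f κ) :
    ∫ κ in (0:ℝ)..1, f κ ≤ ∫ κ in (0:ℝ)..1, f κ * (1 - κ) ^ (a - 1) := by
  have hw : IntervalIntegrable (fun κ : ℝ => (1 - κ) ^ (a - 1)) volume 0 1 := by
    simpa using ((intervalIntegral.intervalIntegrable_rpow' (a := 0) (b := 1)
      (show -1 < a - 1 by linarith)).comp_sub_left 1).symm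
  -- compared on `Ioo 0 1` only: at `κ = 1` the weight is `0 ^ (a - 1) = 0`
  refine intervalIntegral.integral_mono_on_of_le_Ioo zero_le_one
    (hf.intervalIntegrable_of_Icc zero_le_one) (hw.continuousOn_mul (by rwa [uIcc_of_le zero_le_one])) fun κ hκ => ?_
  exact le_mul_of_one_le_right (hf0 κ hκ)
    (one_le_rpow_of_pos_of_le_one_of_nonpos (by linarith [hκ.2]) (by linarith [hκ.1])
      (by linarith))

theorem continuous_rpow_mul_exp_neg_mul_div_two {c : ℝ} (s : ℝ) (hc : 0 ≤ c) :
    Continuous fun κ : ℝ => κ ^ c * exp (-(κ * s) / 2) :=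
  (continuous_rpow_const hc).mul (by fun_prop)

theorem integral_rpow_mul_exp_neg_div_two_pos {c s : ℝ} (hc : -1 < c) (hs : 0 < s) :
    0 < ∫ t in (0:ℝ)..s, t ^ c * exp (-t / 2) := by
  refine intervalIntegral.intervalIntegral_pos_of_pos_on ?_ (fun t ht => ?_) hs
  · exact (intervalIntegral.intervalIntegrable_rpow' hc).mul_continuousOn (by fun_prop)
  · have ht0 : 0 < t := ht.1
    positivity

theorem rpow_mul_integral_rpow_mul_exp_mul_one_sub_rpow_le {a c s η : ℝ} (ha : a ≤ 1)
    (hc : 0 ≤ c) (hs : 0 < s) (hη : 0 ≤ η) (hη1 : η < 1) :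
    s ^ (c + 1) * ∫ κ in (0:ℝ)..η, κ ^ c * exp (-(κ * s) / 2) * (1 - κ) ^ (a - 1)
      ≤ (1 - η) ^ (a - 1) * Gamma (c + 1) * 2 ^ (c + 1) := by
  have hΓ : ∫ t in (0:ℝ)..η * s, t ^ c * exp (-t / 2) ≤ Gamma (c + 1) * 2 ^ (c + 1) := by
    rw [mul_comm (Gamma _)]
    convert integral_rpow_mul_exp_neg_mul_le_Gamma (a := c + 1) (r := 1/2) (T := η * s)
      (by linarith) one_half_pos (by positivity) using 3
    · ring_nf
    · norm_num
  calc s ^ (c + 1) * ∫ κ in (0:ℝ)..η, κ ^ c * exp (-(κ * s) / 2) * (1 - κ) ^ (a - 1)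
      ≤ s ^ (c + 1) * ((1 - η) ^ (a - 1) * ∫ κ in (0:ℝ)..η, κ ^ c * exp (-(κ * s) / 2)) := by
        gcongr
        exact integral_mul_one_sub_rpow_le ha hη hη1
          (continuous_rpow_mul_exp_neg_mul_div_two s hc).continuousOn
          fun κ hκ => mul_nonneg (rpow_nonneg hκ.1 c) (exp_pos _).le
    _ = (1 - η) ^ (a - 1) * ∫ t in (0:ℝ)..η * s, t ^ c * exp (-t / 2) := by
        rw [← rpow_mul_integral_rpow_mul_comp_mul c (fun t => exp (-t / 2)) hs hη]
        ring
    _ ≤ (1 - η) ^ (a - 1) * Gamma (c + 1) * 2 ^ (c + 1) := by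
        rw [mul_assoc]
        gcongr

theorem integral_rpow_mul_exp_le_rpow_mul_integral_mul_one_sub_rpow {a c s : ℝ} (ha0 : 0 < a)
    (ha1 : a ≤ 1) (hc : 0 ≤ c) (hs : 0 < s) :
    ∫ t in (0:ℝ)..s, t ^ c * exp (-t / 2)
      ≤ s ^ (c + 1) * ∫ κ in (0:ℝ)..1, κ ^ c * exp (-(κ * s) / 2) * (1 - κ) ^ (a - 1) := by
  calc ∫ t in (0:ℝ)..s, t ^ c * exp (-t / 2)
      = s ^ (c + 1) * ∫ κ in (0:ℝ)..1, κ ^ c * exp (-(κ * s) / 2) := by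
        rw [rpow_mul_integral_rpow_mul_comp_mul c (fun t => exp (-t / 2)) hs zero_le_one,
          one_mul]
    _ ≤ s ^ (c + 1) * ∫ κ in (0:ℝ)..1, κ ^ c * exp (-(κ * s) / 2) * (1 - κ) ^ (a - 1) := by
        gcongr
        exact integral_le_integral_mul_one_sub_rpow ha0 ha1
          (continuous_rpow_mul_exp_neg_mul_div_two s hc).continuousOn
          fun κ hκ => mul_nonneg (rpow_nonneg hκ.1.le c) (exp_pos _).le

theorem stmt_9_general (a b η x : ℝ) (ha : a ∈ Set.Ioo (0:ℝ) 1) (hb : b ∈ Set.Ioi (1/2 : ℝ))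
    (hη : η ∈ Set.Ioo (0:ℝ) 1) (hx : x ≠ 0) :
    (∫ κ in (0:ℝ)..η, κ ^ (b + 1/2) * (1 - κ) ^ (a - 1) * Real.exp (-κ * x^2 / 2)) /
      (∫ κ in (0:ℝ)..1, κ ^ (b - 1/2) * (1 - κ) ^ (a - 1) * Real.exp (-κ * x^2 / 2))
    ≤ (1 - η) ^ (a - 1) * Real.Gamma (b + 3/2) * 2 ^ (b + 3/2) *
        (x^2 * ∫ t in (0:ℝ)..x^2, t ^ (b - 1/2) * Real.exp (-t / 2))⁻¹ := by
  obtain ⟨ha0, ha1⟩ := ha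
  obtain ⟨hη0, hη1⟩ := hη
  have hb : 1/2 < b := hb
  have hs : 0 < x ^ 2 := by positivity
  set s := x ^ 2
  simp_rw [mul_right_comm (_ : ℝ) ((1 - _ : ℝ) ^ (a - 1)), neg_mul]
  have hN := rpow_mul_integral_rpow_mul_exp_mul_one_sub_rpow_le (c := b + 1/2) ha1.le
    (by linarith) hs hη0.le hη1
  rw [rpow_add_one hs.ne', show b + 1/2 + 1 = b + 3/2 by ring] at hN
  have hD := integral_rpow_mul_exp_le_rpow_mul_integral_mul_one_sub_rpow (c := b - 1/2) ha0
    ha1.le (by linarith) hs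
  rw [show b - 1/2 + 1 = b + 1/2 by ring] at hD
  have hI := integral_rpow_mul_exp_neg_div_two_pos (c := b - 1/2) (by linarith) hs
  set N := ∫ κ in (0:ℝ)..η, κ ^ (b + 1/2) * exp (-(κ * s) / 2) * (1 - κ) ^ (a - 1)
  set D := ∫ κ in (0:ℝ)..1, κ ^ (b - 1/2) * exp (-(κ * s) / 2) * (1 - κ) ^ (a - 1)
  have hD0 : 0 < D := pos_of_mul_pos_right (hI.trans_le hD) (by positivity)
  have hN0 : 0 ≤ N := intervalIntegral.integral_nonneg hη0.le fun κ hκ =>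
    mul_nonneg (mul_nonneg (rpow_nonneg hκ.1 _) (exp_pos _).le)
      (rpow_nonneg (by linarith [hκ.2]) _)
  rw [div_le_iff₀ hD0, ← div_eq_mul_inv, div_mul_eq_mul_div, le_div_iff₀ (by positivity)]
  calc N * (s * _) ≤ N * (s * (s ^ (b + 1/2) * D)) := by gcongr
    _ = s ^ (b + 1/2) * s * N * D := by ring
    _ ≤ _ := by gcongr

/-- Bound on E(κ·1{κ<η} | x) in terms of the incomplete Gamma-type integral. -/
theorem stmt_9 (a b η δ x : ℝ) (ha : a ∈ Set.Ioo (0:ℝ) 1) (hb : b ∈ Set.Ioi (1/2 : ℝ))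
    (hη : η ∈ Set.Ioo (0:ℝ) 1) (hδ : δ ∈ Set.Ioo (0:ℝ) 1) (hx : x ≠ 0) :
    (∫ κ in (0:ℝ)..η, κ ^ (b + 1/2) * (1 - κ) ^ (a - 1) * Real.exp (-κ * x^2 / 2)) /
      (∫ κ in (0:ℝ)..1, κ ^ (b - 1/2) * (1 - κ) ^ (a - 1) * Real.exp (-κ * x^2 / 2))
    ≤ (1 - η) ^ (a - 1) * Real.Gamma (b + 3/2) * 2 ^ (b + 3/2) *
        (x^2 * ∫ t in (0:ℝ)..x^2, t ^ (b - 1/2) * Real.exp (-t / 2))⁻¹ :=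
  stmt_9_general a b η x ha hb hη hx
end

section
/- Let b ∈ (1/2,∞) be fixed. For the posterior density π(κ|x) ∝ e^{-κx²/2} κ^{b-1/2}(1-κ)^{a-1} on (0,1), the posterior expectation E(1-κ|x), viewed as a function of the hyperparameter a ∈ (0,∞) with x fixed, is nondecreasing in a. -/
/-!
Put `u = 1 - κ`, `δ = a₂ - a₁ ≥ 0` and let `w` be the posterior density at `a₁`. After clearing
denominators the claim is Chebyshev's integral inequality `∫ w u · ∫ w u^δ ≤ ∫ w u^(1+δ) · ∫ w`
for the similarly ordered functions `u` and `u^δ`; it is the nonnegativity of the double integral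
`∫∫ w(s) w(t) (u(t) - u(s)) (u(t)^δ - u(s)^δ) ds dt`.
-/

open Real MeasureTheory Set

theorem MonovaryOn.integral_mul_integral_le {α : Type*} [MeasurableSpace α] {μ : Measure α}
    [SFinite μ] {s : Set α} (hs : MeasurableSet s) {w f g : α → ℝ} (hfg : MonovaryOn f g s)
    (hw : ∀ x ∈ s, 0 ≤ w x) (hw_int : IntegrableOn w s μ)
    (hwf : IntegrableOn (fun x ↦ w x * f x) s μ) (hwg : IntegrableOn (fun x ↦ w x * g x) s μ)
    (hwfg : IntegrableOn (fun x ↦ w x * (f x * g x)) s μ) :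
    (∫ x in s, w x * f x ∂μ) * (∫ x in s, w x * g x ∂μ) ≤
      (∫ x in s, w x * (f x * g x) ∂μ) * ∫ x in s, w x ∂μ := by
  set ν := μ.restrict s
  have hnonneg :
      0 ≤ ∫ p, w p.1 * w p.2 * ((f p.2 - f p.1) * (g p.2 - g p.1)) ∂ν.prod ν := by
    refine integral_nonneg_of_ae ?_
    rw [Measure.prod_restrict]
    filter_upwards [ae_restrict_mem (hs.prod hs)] with p ⟨h₁, h₂⟩
    exact mul_nonneg (mul_nonneg (hw _ h₁) (hw _ h₂)) (hfg.sub_mul_sub_nonneg h₁ h₂)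
  have hexpand : (fun p : α × α ↦ w p.1 * w p.2 * ((f p.2 - f p.1) * (g p.2 - g p.1))) =
      fun p ↦ (w p.1 * (f p.1 * g p.1)) * w p.2 + w p.1 * (w p.2 * (f p.2 * g p.2)) -
        (w p.1 * f p.1) * (w p.2 * g p.2) - (w p.1 * g p.1) * (w p.2 * f p.2) := by
    ext; ring
  have h₁ := hwfg.mul_prod hw_int
  have h₂ := hw_int.mul_prod hwfg
  have h₃ := hwf.mul_prod hwg
  have h₄ := hwg.mul_prod hwf
  rw [hexpand, integral_sub, integral_sub, integral_add] at hnonneg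
  rw [integral_prod_mul (fun x ↦ w x * (f x * g x)) w,
    integral_prod_mul w (fun x ↦ w x * (f x * g x)),
    integral_prod_mul (fun x ↦ w x * f x) (fun x ↦ w x * g x),
    integral_prod_mul (fun x ↦ w x * g x) (fun x ↦ w x * f x)] at hnonneg
  · linarith
  exacts [h₁, h₂, h₁.add h₂, h₃, (h₁.add h₂).sub h₃, h₄]

-- `posteriorKernel b x (a - 1)` is the unnormalised posterior density `π(κ | x)` of the statement.
noncomputable def posteriorKernel (b x p κ : ℝ) : ℝ :=
  κ ^ (b - 1/2) * (1 - κ) ^ p * exp (-κ * x ^ 2 / 2)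

section posteriorKernel

variable {b x p : ℝ}

theorem posteriorKernel_mul_rpow {κ : ℝ} (hκ : κ ∈ Ioo (0 : ℝ) 1) (q : ℝ) :
    posteriorKernel b x p κ * (1 - κ) ^ q = posteriorKernel b x (p + q) κ := by
  rw [posteriorKernel, posteriorKernel, rpow_add (sub_pos.2 hκ.2)]
  ring

theorem intervalIntegrable_posteriorKernel (hb : 1/2 ≤ b) (hp : -1 < p) :
    IntervalIntegrable (posteriorKernel b x p) volume 0 1 := by
  have h_one_sub : IntervalIntegrable (fun κ : ℝ ↦ (1 - κ) ^ p) volume 0 1 := by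
    simpa using
      ((intervalIntegral.intervalIntegrable_rpow' (a := 0) (b := 1) hp).comp_sub_left 1).symm
  have h_cont : ContinuousOn (fun κ : ℝ ↦ κ ^ (b - 1/2) * exp (-κ * x ^ 2 / 2)) (uIcc 0 1) :=
    ((continuous_rpow_const (by linarith)).mul (by fun_prop)).continuousOn
  refine (h_one_sub.mul_continuousOn h_cont).congr fun κ _ ↦ ?_
  simp only [posteriorKernel]
  ring

theorem integrableOn_posteriorKernel (hb : 1/2 ≤ b) (hp : -1 < p) :
    IntegrableOn (posteriorKernel b x p) (Ioo 0 1) :=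
  (intervalIntegrable_posteriorKernel hb hp).1.mono_set Ioo_subset_Ioc_self

theorem integral_posteriorKernel_pos (hb : 1/2 ≤ b) (hp : -1 < p) :
    0 < ∫ κ in (0 : ℝ)..1, posteriorKernel b x p κ :=
  intervalIntegral.intervalIntegral_pos_of_pos_on (intervalIntegrable_posteriorKernel hb hp)
    (fun κ hκ ↦ by have := sub_pos.2 hκ.2; have := hκ.1; unfold posteriorKernel; positivity)
    one_pos

theorem antitoneOn_one_sub_rpow {q : ℝ} (hq : 0 ≤ q) :
    AntitoneOn (fun κ : ℝ ↦ (1 - κ) ^ q) (Ioo 0 1) := fun _ _ _ hκ hle ↦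
  rpow_le_rpow (sub_pos.2 hκ.2).le (by linarith) hq

theorem integral_posteriorKernel_mul_le {a₁ a₂ : ℝ} (hb : 1/2 ≤ b) (ha₁ : 0 < a₁)
    (ha : a₁ ≤ a₂) :
    (∫ κ in (0 : ℝ)..1, posteriorKernel b x a₁ κ) *
        (∫ κ in (0 : ℝ)..1, posteriorKernel b x (a₂ - 1) κ) ≤
      (∫ κ in (0 : ℝ)..1, posteriorKernel b x a₂ κ) *
        ∫ κ in (0 : ℝ)..1, posteriorKernel b x (a₁ - 1) κ := by
  set w := posteriorKernel b x (a₁ - 1)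
  have h_eq : ∀ q p, a₁ - 1 + q = p →
      EqOn (fun κ ↦ w κ * (1 - κ) ^ q) (posteriorKernel b x p) (Ioo 0 1) := by
    rintro q p rfl κ hκ
    exact posteriorKernel_mul_rpow hκ q
  have h_int : ∀ q p, a₁ - 1 + q = p → -1 < p →
      IntegrableOn (fun κ ↦ w κ * (1 - κ) ^ q) (Ioo 0 1) := fun q p hqp hp ↦
    (integrableOn_posteriorKernel hb hp).congr_fun (h_eq q p hqp).symm measurableSet_Ioo
  have h_integral : ∀ q p, a₁ - 1 + q = p →
      ∫ κ in (0 : ℝ)..1, posteriorKernel b x p κ = ∫ κ in Ioo 0 1, w κ * (1 - κ) ^ q :=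
    fun q p hqp ↦ by
      rw [intervalIntegral.integral_of_le zero_le_one, integral_Ioc_eq_integral_Ioo,
        setIntegral_congr_fun measurableSet_Ioo (h_eq q p hqp)]
  have h_prod : EqOn (fun κ ↦ w κ * ((1 - κ) ^ (1 : ℝ) * (1 - κ) ^ (a₂ - a₁)))
      (fun κ ↦ w κ * (1 - κ) ^ (1 + (a₂ - a₁))) (Ioo 0 1) := fun κ hκ ↦ by
    simp only [rpow_add (sub_pos.2 hκ.2)]
  rw [h_integral 1 a₁ (by ring), h_integral (a₂ - a₁) (a₂ - 1) (by ring),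
    h_integral (1 + (a₂ - a₁)) a₂ (by ring), ← setIntegral_congr_fun measurableSet_Ioo h_prod,
    intervalIntegral.integral_of_le zero_le_one, integral_Ioc_eq_integral_Ioo]
  refine ((antitoneOn_one_sub_rpow zero_le_one).monovaryOn
    (antitoneOn_one_sub_rpow (sub_nonneg.2 ha))).integral_mul_integral_le measurableSet_Ioo
    (fun κ hκ ↦ ?_) (integrableOn_posteriorKernel hb (by linarith))
    (h_int 1 a₁ (by ring) (by linarith)) (h_int (a₂ - a₁) (a₂ - 1) (by ring) (by linarith))
    ((h_int (1 + (a₂ - a₁)) a₂ (by ring) (by linarith)).congr_fun h_prod.symm measurableSet_Ioo)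
  have := sub_pos.2 hκ.2
  have := hκ.1
  unfold w posteriorKernel
  positivity

end posteriorKernel

/-- The posterior expectation E(1-κ|x;a) is nondecreasing in the hyperparameter a. -/
theorem stmt_17 (b x : ℝ) (hb : b ∈ Set.Ioi (1/2 : ℝ)) :
    ∀ a₁ a₂ : ℝ, 0 < a₁ → a₁ ≤ a₂ →
      (∫ κ in (0:ℝ)..1, κ ^ (b - 1/2) * (1 - κ) ^ a₁ * Real.exp (-κ * x^2 / 2)) /
          (∫ κ in (0:ℝ)..1, κ ^ (b - 1/2) * (1 - κ) ^ (a₁ - 1) * Real.exp (-κ * x^2 / 2))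
        ≤ (∫ κ in (0:ℝ)..1, κ ^ (b - 1/2) * (1 - κ) ^ a₂ * Real.exp (-κ * x^2 / 2)) /
            (∫ κ in (0:ℝ)..1,
              κ ^ (b - 1/2) * (1 - κ) ^ (a₂ - 1) * Real.exp (-κ * x^2 / 2)) := by
  intro a₁ a₂ ha₁ ha
  have hb' : 1/2 ≤ b := le_of_lt hb
  change (∫ κ in (0:ℝ)..1, posteriorKernel b x a₁ κ) /
      (∫ κ in (0:ℝ)..1, posteriorKernel b x (a₁ - 1) κ) ≤
    (∫ κ in (0:ℝ)..1, posteriorKernel b x a₂ κ) /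
      (∫ κ in (0:ℝ)..1, posteriorKernel b x (a₂ - 1) κ)
  rw [div_le_div_iff₀ (integral_posteriorKernel_pos hb' (by linarith))
    (integral_posteriorKernel_pos hb' (by linarith))]
  exact integral_posteriorKernel_mul_le hb' ha₁ ha
end

section
/- Fix ε ∈ (0,1), b ∈ (1/2,∞), and x ∈ ℝ. Then with π(κ|x; aₙ) ∝ e^{-κx²/2} κ^{b-1/2}(1-κ)^{aₙ-1} on (0,1), for any sequence aₙ ∈ (0,1) with aₙ → 0, the posterior probabilities satisfy Pr(κ ≥ ε | x; aₙ) → 1 as n → ∞. -/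
/-!
The factor `(1 - κ) ^ (t - 1)` has total mass `(1 - ε) ^ t / t` on `[ε, 1]`, which blows up as
`t → 0⁺`, while on `[0, ε]` it stays below `(1 - ε)⁻¹`. Hence for any weight `g` that is bounded
on `[0, 1]` and bounded away from zero on `[ε, 1]`, the mass of `g κ (1 - κ) ^ (t - 1)` on `[0, ε]`
is negligible against the mass on `[ε, 1]`. The posterior weight is `g κ = κ ^ (b - 1/2) e ^ (-κ x² / 2)`.
-/

open Real Filter Topology Set

section OneSubRpow

variable {g : ℝ → ℝ} {ε t M m : ℝ}

lemma intervalIntegrable_one_sub_rpow_s18 (ht : 0 < t) (a b : ℝ) :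
    IntervalIntegrable (fun κ => (1 - κ) ^ (t - 1)) MeasureTheory.volume a b := by
  simpa using ((intervalIntegral.intervalIntegrable_rpow' (a := 1 - b) (b := 1 - a)
    (r := t - 1) (by linarith)).comp_sub_left 1).symm

lemma integral_one_sub_rpow_s18 (ht : 0 < t) (ε : ℝ) :
    ∫ κ in ε..1, (1 - κ) ^ (t - 1) = (1 - ε) ^ t / t := by
  rw [intervalIntegral.integral_comp_sub_left (fun u => u ^ (t - 1)), sub_self,
    integral_rpow (Or.inl (by linarith)), sub_add_cancel, zero_rpow ht.ne', sub_zero]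

lemma one_sub_rpow_sub_one_le_inv {κ : ℝ} (hκ : κ ≤ ε) (hε0 : 0 ≤ ε) (hε1 : ε < 1) (ht0 : 0 ≤ t)
    (ht1 : t ≤ 1) : (1 - κ) ^ (t - 1) ≤ (1 - ε)⁻¹ :=
  calc (1 - κ) ^ (t - 1) ≤ (1 - ε) ^ (t - 1) :=
        rpow_le_rpow_of_nonpos (by linarith) (by linarith) (by linarith)
    _ ≤ (1 - ε) ^ (-1 : ℝ) := rpow_le_rpow_of_exponent_ge (by linarith) (by linarith) (by linarith)
    _ = (1 - ε)⁻¹ := rpow_neg_one _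

lemma abs_integral_mul_one_sub_rpow_le (hε0 : 0 ≤ ε) (hε1 : ε < 1)
    (hM : ∀ κ ∈ Ioc 0 ε, |g κ| ≤ M) (ht0 : 0 ≤ t) (ht1 : t ≤ 1) :
    |∫ κ in (0 : ℝ)..ε, g κ * (1 - κ) ^ (t - 1)| ≤ M * (1 - ε)⁻¹ * ε := by
  simpa [abs_of_nonneg hε0] using intervalIntegral.norm_integral_le_of_norm_le_const
    (a := 0) (b := ε) (C := M * (1 - ε)⁻¹) (f := fun κ => g κ * (1 - κ) ^ (t - 1)) fun κ hκ => by
      rw [uIoc_of_le hε0] at hκ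
      have h1κ : 0 < 1 - κ := by linarith [hκ.2]
      rw [norm_mul, Real.norm_eq_abs, Real.norm_eq_abs, abs_of_nonneg (rpow_nonneg h1κ.le _)]
      exact mul_le_mul (hM κ hκ) (one_sub_rpow_sub_one_le_inv hκ.2 hε0 hε1 ht0 ht1)
        (rpow_nonneg h1κ.le _) ((abs_nonneg _).trans (hM κ hκ))

lemma le_integral_mul_one_sub_rpow (hε : ε ≤ 1) (hg : ContinuousOn g (Icc ε 1))
    (hm : ∀ κ ∈ Icc ε 1, m ≤ g κ) (ht : 0 < t) :
    m * ((1 - ε) ^ t / t) ≤ ∫ κ in ε..1, g κ * (1 - κ) ^ (t - 1) := by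
  rw [← integral_one_sub_rpow_s18 ht, ← intervalIntegral.integral_const_mul]
  refine intervalIntegral.integral_mono_on hε ((intervalIntegrable_one_sub_rpow_s18 ht _ _).const_mul _)
    ((intervalIntegrable_one_sub_rpow_s18 ht _ _).continuousOn_mul (by rwa [uIcc_of_le hε]))
    fun κ hκ => ?_
  exact mul_le_mul_of_nonneg_right (hm κ hκ) (rpow_nonneg (by linarith [hκ.2]) _)

lemma tendsto_integral_mul_one_sub_rpow_atTop {ι : Type*} {l : Filter ι} {t : ι → ℝ}
    (hε : ε < 1) (hg : ContinuousOn g (Icc ε 1)) (hm0 : 0 < m) (hm : ∀ κ ∈ Icc ε 1, m ≤ g κ)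
    (ht : Tendsto t l (𝓝[>] 0)) :
    Tendsto (fun i => ∫ κ in ε..1, g κ * (1 - κ) ^ (t i - 1)) l atTop := by
  have hpow : Tendsto (fun i => (1 - ε) ^ t i) l (𝓝 1) := by
    have h := (continuousAt_const_rpow (by linarith : 1 - ε ≠ 0) (b := 0)).tendsto.comp
      (tendsto_nhds_of_tendsto_nhdsWithin ht)
    rwa [rpow_zero] at h
  have hbound : Tendsto (fun i => m * ((1 - ε) ^ t i / t i)) l atTop := by
    simpa only [div_eq_mul_inv, Function.comp_apply] using
      (hpow.pos_mul_atTop one_pos (tendsto_inv_nhdsGT_zero.comp ht)).const_mul_atTop hm0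
  refine tendsto_atTop_mono' l ?_ hbound
  filter_upwards [ht.eventually eventually_mem_nhdsWithin] with i hi
  exact le_integral_mul_one_sub_rpow hε.le hg hm hi

end OneSubRpow

lemma tendsto_div_add_nhds_one {ι : Type*} {l : Filter ι} {A B : ι → ℝ} {C : ℝ}
    (hA : ∀ᶠ i in l, |A i| ≤ C) (hB : Tendsto B l atTop) :
    Tendsto (fun i => B i / (A i + B i)) l (𝓝 1) := by
  have hB0 : ∀ᶠ i in l, 0 < B i := hB.eventually_gt_atTop 0
  have hAB : Tendsto (fun i => A i / B i) l (𝓝 0) := by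
    refine squeeze_zero_norm' ?_ (by simpa using (tendsto_inv_atTop_zero.comp hB).const_mul C)
    filter_upwards [hA, hB0] with i hAi hBi
    rw [norm_div, Real.norm_eq_abs, Real.norm_eq_abs, abs_of_pos hBi, div_eq_mul_inv]
    exact mul_le_mul_of_nonneg_right hAi (inv_nonneg.2 hBi.le)
  have := (tendsto_const_nhds (x := (1 : ℝ))).add hAB |>.inv₀ (by norm_num)
  rw [add_zero, inv_one] at this
  refine this.congr' ?_
  filter_upwards [hB0] with i hBi
  rw [one_add_div hBi.ne', inv_div, add_comm]

theorem tendsto_integral_div_integral_mul_one_sub_rpow {g : ℝ → ℝ} {ε : ℝ} {ι : Type*}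
    {l : Filter ι} {t : ι → ℝ} (hε : ε ∈ Ioo 0 1) (hg : ContinuousOn g (Icc 0 1))
    (hpos : ∀ κ ∈ Icc ε 1, 0 < g κ) (ht : Tendsto t l (𝓝[>] 0)) :
    Tendsto (fun i => (∫ κ in ε..1, g κ * (1 - κ) ^ (t i - 1)) /
      ∫ κ in (0 : ℝ)..1, g κ * (1 - κ) ^ (t i - 1)) l (𝓝 1) := by
  obtain ⟨hε0, hε1⟩ := hε
  obtain ⟨M, hM⟩ := isCompact_Icc.exists_bound_of_continuousOn hg
  have hgε : ContinuousOn g (Icc ε 1) := hg.mono (Icc_subset_Icc_left hε0.le)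
  obtain ⟨κ₀, hκ₀, hmin⟩ := isCompact_Icc.exists_isMinOn (nonempty_Icc.2 hε1.le) hgε
  have hintegrable : ∀ s : ℝ, 0 < s → ∀ a b, a ∈ Icc (0 : ℝ) 1 → b ∈ Icc (0 : ℝ) 1 →
      IntervalIntegrable (fun κ => g κ * (1 - κ) ^ (s - 1)) MeasureTheory.volume a b :=
    fun s hs a b ha hb => (intervalIntegrable_one_sub_rpow_s18 hs a b).continuousOn_mul
      (hg.mono (uIcc_subset_Icc ha hb))
  have hsmall : ∀ᶠ i in l, t i ∈ Ioc 0 1 := ht.eventually (Ioc_mem_nhdsGT one_pos)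
  have hA : ∀ᶠ i in l, |∫ κ in (0 : ℝ)..ε, g κ * (1 - κ) ^ (t i - 1)| ≤ M * (1 - ε)⁻¹ * ε := by
    filter_upwards [hsmall] with i hi
    exact abs_integral_mul_one_sub_rpow_le hε0.le hε1
      (fun κ hκ => hM κ ⟨hκ.1.le, hκ.2.trans hε1.le⟩) hi.1.le hi.2
  refine (tendsto_div_add_nhds_one hA <| tendsto_integral_mul_one_sub_rpow_atTop hε1 hgε
    (hpos κ₀ hκ₀) (fun κ hκ => hmin hκ) ht).congr' ?_
  filter_upwards [hsmall] with i hi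
  rw [← intervalIntegral.integral_add_adjacent_intervals
    (hintegrable _ hi.1 0 ε (left_mem_Icc.2 zero_le_one) ⟨hε0.le, hε1.le⟩)
    (hintegrable _ hi.1 ε 1 ⟨hε0.le, hε1.le⟩ (right_mem_Icc.2 zero_le_one))]

/-- If aₙ → 0 then Pr(κ ≥ ε | x; aₙ) → 1 for fixed x. -/
theorem stmt_18 (ε b x : ℝ) (hε : ε ∈ Set.Ioo (0:ℝ) 1) (hb : b ∈ Set.Ioi (1/2 : ℝ))
    (a : ℕ → ℝ) (ha : ∀ n, a n ∈ Set.Ioo (0:ℝ) 1) (ha0 : Tendsto a atTop (nhds 0)) :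
    Tendsto (fun n =>
      (∫ κ in ε..1, κ ^ (b - 1/2) * (1 - κ) ^ (a n - 1) * Real.exp (-κ * x^2 / 2)) /
        (∫ κ in (0:ℝ)..1, κ ^ (b - 1/2) * (1 - κ) ^ (a n - 1) * Real.exp (-κ * x^2 / 2)))
      atTop (nhds 1) := by
  have hg : ContinuousOn (fun κ : ℝ => κ ^ (b - 1/2) * exp (-κ * x ^ 2 / 2)) (Icc 0 1) :=
    ((continuous_rpow_const (by linarith [mem_Ioi.1 hb])).mul (by fun_prop)).continuousOn
  have hpos : ∀ κ ∈ Icc ε 1, 0 < κ ^ (b - 1/2) * exp (-κ * x ^ 2 / 2) := fun κ hκ =>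
    mul_pos (rpow_pos_of_pos (hε.1.trans_le hκ.1) _) (exp_pos _)
  have ht : Tendsto a atTop (𝓝[>] 0) :=
    tendsto_nhdsWithin_iff.2 ⟨ha0, .of_forall fun n => (ha n).1⟩
  convert tendsto_integral_div_integral_mul_one_sub_rpow hε hg hpos ht using 5 <;> ring
end
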